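/- Let T be a tribracket and X an entropic tribracket. For any homomorphisms f,g,h: T → X, the unique pointwise solution a: T → X of [a(t),f(t),g(t)]_X = h(t) for all t ∈ T (existing by left-invertibility of the tribracket operation in X) is itself a tribracket homomorphism. -/

import Mathlib

structure Tribracket (X : Type*) where
  br : X → X → X → X
  exu_left : ∀ x y z, ∃! a, br a x y = z
  exu_mid : ∀ x y z, ∃! b, br x b y = z
  exu_right : ∀ x y z, ∃! c, br x y c = z
  tri1 : ∀ x y z w, br y (br x y z) (br x y w) = br z (br x y z) (br x z w)
  tri2 : ∀ x y z w, br z (br x y z) (br x z w) = br w (br x y w) (br x z w)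

def Tribracket.IsEntropic {X : Type*} (T : Tribracket X) : Prop :=
  ∀ x y z u v w a b c,
    T.br (T.br x y z) (T.br u v w) (T.br a b c) =
    T.br (T.br x u a) (T.br y v b) (T.br z w c)

def IsTriHom {X Y : Type*} (TX : Tribracket X) (TY : Tribracket Y) (f : X → Y) : Prop :=
  ∀ x y z, f (TX.br x y z) = TY.br (f x) (f y) (f z)

theorem Tribracket.injective_left {X : Type*} (T : Tribracket X) (x y : X) :
    Function.Injective fun a => T.br a x y :=
  fun _ b hab => (T.exu_left x y (T.br b x y)).unique hab rfl

theorem pointwise_left_solution_is_hom {T X : Type*} (TT : Tribracket T) (TX : Tribracket X)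
    (hX : TX.IsEntropic) (f g h : T → X)
    (hf : IsTriHom TT TX f) (hg : IsTriHom TT TX g) (hh : IsTriHom TT TX h)
    (a : T → X) (ha : ∀ t, TX.br (a t) (f t) (g t) = h t) :
    IsTriHom TT TX a := by
  intro x y z
  apply TX.injective_left (f (TT.br x y z)) (g (TT.br x y z))
  calc TX.br (a (TT.br x y z)) (f (TT.br x y z)) (g (TT.br x y z))
      = TX.br (h x) (h y) (h z) := by rw [ha, hh]
    _ = TX.br (TX.br (a x) (f x) (g x)) (TX.br (a y) (f y) (g y)) (TX.br (a z) (f z) (g z)) := by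
        rw [ha, ha, ha]
    _ = TX.br (TX.br (a x) (a y) (a z)) (TX.br (f x) (f y) (f z)) (TX.br (g x) (g y) (g z)) :=
        hX ..
    _ = TX.br (TX.br (a x) (a y) (a z)) (f (TT.br x y z)) (g (TT.br x y z)) := by rw [hf, hg]
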